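/- Let (xₙ), (yₙ) ∈ ℓ²(ℤ, ℂ) with discrete-time Fourier transforms x̌(ω) = ∑ₙ xₙ e^{-iωn} and y̌(ω). Then 2·∑_{n∈ℤ} (∑_{k∈ℤ} x_k conj(y_{k-2n})) e^{-2iωn} = x̌(ω)·conj(y̌(ω)) + x̌(ω+π)·conj(y̌(ω+π)). Consequently, ∑_{k∈ℤ} x_k conj(y_{k-2n}) = 0 for all n ∈ ℤ if and only if x̌(ω) conj(y̌(ω)) + x̌(ω+π) conj(y̌(ω+π)) = 0 for (almost) all ω. -/

import Mathlib

/-!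
Multiplying out the two DTFT series and reindexing by the lag `d = k - j` shows that
`x̌ · conj y̌` is the DTFT of the cross-correlation `r d = ∑ₖ xₖ conj(y_{k-d})`. Shifting the
frequency by `π` multiplies the `d`-th coefficient by `(-1)^d`, so in the sum of the two copies
the odd lags cancel and the even ones double. The converse direction of the equivalence is
uniqueness of the coefficients of an absolutely convergent trigonometric series, obtained by
integrating against `e^{iωn}` over a period.
-/

/-- The discrete-time Fourier transform of a sequence `(xₙ)_{n∈ℤ}`. -/
noncomputable def dtft (x : ℤ → ℂ) (ω : ℝ) : ℂ :=
  ∑' n : ℤ, x n * Complex.exp (-(Complex.I * ω * (n : ℝ)))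

open Complex MeasureTheory ComplexConjugate

lemma norm_exp_neg_I_mul (ω t : ℝ) : ‖exp (-(I * ω * t))‖ = 1 := by
  rw [show -(I * ω * t) = ((-(ω * t) : ℝ) : ℂ) * I by push_cast; ring]
  exact norm_exp_ofReal_mul_I _

lemma exp_neg_I_mul_add_pi (ω : ℝ) (n : ℤ) :
    exp (-(I * ↑(ω + Real.pi) * (n : ℝ))) = (-1) ^ n * exp (-(I * ω * (n : ℝ))) := by
  rw [← exp_neg_pi_mul_I, ← exp_int_mul, ← exp_add]
  congr 1
  push_cast
  ring

section

variable {c x y : ℤ → ℂ}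

lemma summable_dtft_term (hc : Summable fun n => ‖c n‖) (ω : ℝ) :
    Summable fun n : ℤ => c n * exp (-(I * ω * (n : ℝ))) :=
  .of_norm (hc.congr fun n => by rw [norm_mul, norm_exp_neg_I_mul, mul_one])

lemma conj_dtft (ω : ℝ) :
    conj (dtft y ω) = ∑' n : ℤ, conj (y n) * exp (I * ω * (n : ℝ)) := by
  rw [dtft, conj_tsum]
  congr 1 with n
  rw [map_mul, ← exp_conj]
  congr 2
  simp [conj_ofReal]

noncomputable def crossCorr (x y : ℤ → ℂ) (d : ℤ) : ℂ :=
  ∑' k : ℤ, x k * conj (y (k - d))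

def lagEquiv : ℤ × ℤ ≃ ℤ × ℤ where
  toFun p := (p.2, p.2 - p.1)
  invFun q := (q.1 - q.2, q.1)
  left_inv p := by simp
  right_inv q := by simp

@[simp]
lemma lagEquiv_apply (p : ℤ × ℤ) : lagEquiv p = (p.2, p.2 - p.1) := rfl

lemma summable_norm_mul_norm_sub (hx : Summable fun n => ‖x n‖) (hy : Summable fun n => ‖y n‖) :
    Summable fun p : ℤ × ℤ => ‖x p.2‖ * ‖y (p.2 - p.1)‖ := by
  have h : Summable fun p : ℤ × ℤ => ‖x p.1‖ * ‖y p.2‖ :=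
    hx.mul_of_nonneg hy (fun _ => norm_nonneg _) fun _ => norm_nonneg _
  simpa only [Function.comp_def, lagEquiv_apply] using h.comp_injective lagEquiv.injective

lemma summable_norm_crossCorr (hx : Summable fun n => ‖x n‖) (hy : Summable fun n => ‖y n‖) :
    Summable fun d => ‖crossCorr x y d‖ := by
  have h := summable_norm_mul_norm_sub hx hy
  refine (summable_prod_of_nonneg fun _ => by positivity).1 h |>.2.of_nonneg_of_le
    (fun _ => norm_nonneg _) fun d => ?_
  refine (norm_tsum_le_tsum_norm ?_).trans_eq (by simp)
  exact (h.prod_factor d).congr fun k => by simp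

lemma dtft_mul_conj_dtft (hx : Summable fun n => ‖x n‖) (hy : Summable fun n => ‖y n‖) (ω : ℝ) :
    dtft x ω * conj (dtft y ω) = dtft (crossCorr x y) ω := by
  have hy' : Summable fun n : ℤ => ‖conj (y n) * exp (I * ω * (n : ℝ))‖ := by
    refine hy.congr fun n => ?_
    simp [norm_exp]
  have hterm : Summable fun p : ℤ × ℤ =>
      x p.2 * conj (y (p.2 - p.1)) * exp (-(I * ω * (p.1 : ℝ))) :=
    .of_norm <| (summable_norm_mul_norm_sub hx hy).congr fun p => by
      rw [norm_mul, norm_mul, norm_exp_neg_I_mul, RCLike.norm_conj, mul_one]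
  rw [conj_dtft, dtft, tsum_mul_tsum_of_summable_norm (summable_dtft_term hx ω).norm hy',
    ← lagEquiv.tsum_eq]
  calc ∑' p : ℤ × ℤ, x (lagEquiv p).1 * exp (-(I * ω * ((lagEquiv p).1 : ℝ))) *
        (conj (y (lagEquiv p).2) * exp (I * ω * ((lagEquiv p).2 : ℝ)))
      = ∑' p : ℤ × ℤ, x p.2 * conj (y (p.2 - p.1)) * exp (-(I * ω * (p.1 : ℝ))) := by
        congr 1 with p
        rw [lagEquiv_apply, mul_mul_mul_comm, ← exp_add]
        push_cast
        ring_nf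
    _ = dtft (crossCorr x y) ω := by
        rw [hterm.tsum_prod' fun d => hterm.prod_factor d, dtft]
        simp only [crossCorr, tsum_mul_right]

lemma dtft_add_dtft_add_pi (hc : Summable fun n => ‖c n‖) (ω : ℝ) :
    dtft c ω + dtft c (ω + Real.pi) = 2 * dtft (fun n => c (2 * n)) (2 * ω) := by
  set f : ℤ → ℂ := fun n => (1 + (-1) ^ n) * (c n * exp (-(I * ω * (n : ℝ)))) with hf
  have hsupp : Function.support f ⊆ Set.range (2 * ·) := fun n hn => by
    obtain ⟨m, rfl⟩ | hn_odd := Int.even_or_odd n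
    · exact ⟨m, two_mul m⟩
    · exact absurd (by simp [hf, hn_odd.neg_one_zpow]) hn
  calc dtft c ω + dtft c (ω + Real.pi) = ∑' n, f n := by
        rw [dtft, dtft, ← (summable_dtft_term hc ω).tsum_add (summable_dtft_term hc _)]
        congr 1 with n
        rw [exp_neg_I_mul_add_pi, hf]
        ring
    _ = ∑' m, f (2 * m) := ((mul_right_injective₀ two_ne_zero).tsum_eq hsupp).symm
    _ = 2 * dtft (fun n => c (2 * n)) (2 * ω) := by
        rw [dtft, ← tsum_mul_left]
        congr 1 with m
        simp only [hf, (even_two_mul m).neg_one_zpow]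
        push_cast
        ring_nf

lemma integral_exp_I_mul_int (k : ℤ) :
    ∫ ω in (0)..(2 * Real.pi), exp (I * ω * (k : ℝ)) = if k = 0 then 2 * Real.pi else 0 := by
  split_ifs with hk
  · simp [hk]
  · have hk' : I * (k : ℂ) ≠ 0 := mul_ne_zero I_ne_zero (Int.cast_ne_zero.2 hk)
    have hcomm : ∀ ω : ℝ, I * ω * ((k : ℝ) : ℂ) = I * k * ω := fun ω => by push_cast; ring
    simp only [hcomm]
    rw [integral_exp_mul_complex hk']
    have hperiod : I * k * (2 * Real.pi : ℝ) = k * (2 * Real.pi * I) := by push_cast; ring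
    rw [hperiod, exp_int_mul_two_pi_mul_I]
    simp

lemma integral_dtft_mul_exp (hc : Summable fun n => ‖c n‖) (n : ℤ) :
    ∫ ω in (0)..(2 * Real.pi), dtft c ω * exp (I * ω * (n : ℝ)) = 2 * Real.pi * c n := by
  have hsum : HasSum (fun m => ∫ ω in (0)..(2 * Real.pi),
      c m * exp (-(I * ω * (m : ℝ))) * exp (I * ω * (n : ℝ)))
      (∫ ω in (0)..(2 * Real.pi), dtft c ω * exp (I * ω * (n : ℝ))) := by
    refine intervalIntegral.hasSum_integral_of_dominated_convergence (fun m _ => ‖c m‖)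
      (fun m => by fun_prop) (fun m => ae_of_all _ fun ω _ => ?_) (ae_of_all _ fun _ _ => hc)
      intervalIntegrable_const
      (ae_of_all _ fun ω _ => (summable_dtft_term hc ω).hasSum.mul_right _)
    simp [norm_exp]
  have hterm (m : ℤ) : ∫ ω in (0)..(2 * Real.pi),
      c m * exp (-(I * ω * (m : ℝ))) * exp (I * ω * (n : ℝ)) =
        if m = n then 2 * Real.pi * c n else 0 := by
    have hexp (ω : ℝ) : c m * exp (-(I * ω * (m : ℝ))) * exp (I * ω * (n : ℝ)) =
        c m * exp (I * ω * ((n - m : ℤ) : ℝ)) := by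
      rw [mul_assoc, ← exp_add]
      push_cast
      ring_nf
    simp only [hexp, intervalIntegral.integral_const_mul, integral_exp_I_mul_int, sub_eq_zero,
      eq_comm (a := n)]
    split_ifs with h
    · rw [h]
      push_cast
      ring
    · simp
  rw [funext hterm] at hsum
  exact hsum.unique (hasSum_ite_eq n _)

lemma eq_zero_of_dtft_eq_zero (hc : Summable fun n => ‖c n‖) (h : ∀ ω, dtft c ω = 0) : c = 0 := by
  funext n
  have := integral_dtft_mul_exp hc n
  simp only [h, zero_mul, intervalIntegral.integral_zero] at this
  simpa [Real.pi_ne_zero] using this.symm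

end

theorem dtft_orthogonality_quadrature_general (x y : ℤ → ℂ)
    (hx1 : Summable fun n : ℤ => ‖x n‖)
    (hy1 : Summable fun n : ℤ => ‖y n‖) :
    ((∀ ω : ℝ,
      2 * ∑' n : ℤ, (∑' k : ℤ, x k * (starRingEnd ℂ) (y (k - 2 * n))) *
          Complex.exp (-(2 * Complex.I * ω * (n : ℝ))) =
        dtft x ω * (starRingEnd ℂ) (dtft y ω) +
          dtft x (ω + Real.pi) * (starRingEnd ℂ) (dtft y (ω + Real.pi))) ∧
    ((∀ n : ℤ, (∑' k : ℤ, x k * (starRingEnd ℂ) (y (k - 2 * n))) = 0) ↔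
      (∀ ω : ℝ,
        dtft x ω * (starRingEnd ℂ) (dtft y ω) +
          dtft x (ω + Real.pi) * (starRingEnd ℂ) (dtft y (ω + Real.pi)) = 0))) := by
  set r : ℤ → ℂ := fun n => crossCorr x y (2 * n)
  have hr : Summable fun n => ‖r n‖ :=
    (summable_norm_crossCorr hx1 hy1).comp_injective (mul_right_injective₀ two_ne_zero)
  have hsum_eq_dtft (ω : ℝ) :
      ∑' n : ℤ, (∑' k : ℤ, x k * conj (y (k - 2 * n))) * exp (-(2 * I * ω * (n : ℝ))) =
        dtft r (2 * ω) := by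
    refine tsum_congr fun n => congrArg (crossCorr x y (2 * n) * ·) ?_
    push_cast
    ring_nf
  have identity (ω : ℝ) :
      2 * ∑' n : ℤ, (∑' k : ℤ, x k * conj (y (k - 2 * n))) * exp (-(2 * I * ω * (n : ℝ))) =
        dtft x ω * conj (dtft y ω) + dtft x (ω + Real.pi) * conj (dtft y (ω + Real.pi)) := by
    rw [hsum_eq_dtft, dtft_mul_conj_dtft hx1 hy1, dtft_mul_conj_dtft hx1 hy1,
      dtft_add_dtft_add_pi (summable_norm_crossCorr hx1 hy1)]
  refine ⟨identity, fun h ω => ?_, fun h => congrFun (eq_zero_of_dtft_eq_zero hr fun ω => ?_)⟩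
  · simp [← identity, h]
  · have hω := identity (ω / 2)
    rw [h, hsum_eq_dtft, mul_div_cancel₀ ω two_ne_zero] at hω
    exact (mul_eq_zero.1 hω).resolve_left two_ne_zero

/-- For sequences `(xₙ), (yₙ) ∈ ℓ¹(ℤ) ∩ ℓ²(ℤ)` with DTFTs `x̌, y̌`:
`2 ∑_{n} (∑_{k} x_k conj(y_{k-2n})) e^{-2iωn} = x̌(ω) conj(y̌(ω)) + x̌(ω+π) conj(y̌(ω+π))`,
and consequently `∑_k x_k conj(y_{k-2n}) = 0` for all `n` iff
`x̌(ω) conj(y̌(ω)) + x̌(ω+π) conj(y̌(ω+π)) = 0` for all `ω`. -/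
theorem dtft_orthogonality_quadrature (x y : ℤ → ℂ)
    (hx1 : Summable fun n : ℤ => ‖x n‖) (hx2 : Summable fun n : ℤ => ‖x n‖ ^ 2)
    (hy1 : Summable fun n : ℤ => ‖y n‖) (hy2 : Summable fun n : ℤ => ‖y n‖ ^ 2) :
    ((∀ ω : ℝ,
      2 * ∑' n : ℤ, (∑' k : ℤ, x k * (starRingEnd ℂ) (y (k - 2 * n))) *
          Complex.exp (-(2 * Complex.I * ω * (n : ℝ))) =
        dtft x ω * (starRingEnd ℂ) (dtft y ω) +
          dtft x (ω + Real.pi) * (starRingEnd ℂ) (dtft y (ω + Real.pi))) ∧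
    ((∀ n : ℤ, (∑' k : ℤ, x k * (starRingEnd ℂ) (y (k - 2 * n))) = 0) ↔
      (∀ ω : ℝ,
        dtft x ω * (starRingEnd ℂ) (dtft y ω) +
          dtft x (ω + Real.pi) * (starRingEnd ℂ) (dtft y (ω + Real.pi)) = 0))) :=
  dtft_orthogonality_quadrature_general x y hx1 hy1
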